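/- Let r > 0 and set x = 1/(r+2). Then the point (x, x, r·x) is a stationary point of the symmetric vector field F (i.e. F_1 = F_2 = F_3 = 0 at this point) if and only if P_{a,β}(r) = a·r^{β+1} − r^β + (1+a)·r − 2a = 0. -/

import Mathlib

/-!
At `(x, x, r x)` every `x ^ β` factors out of the fraction in `F₁`, so `F₁ = 0` becomes the
polynomial-like identity `(r + 2) (1 + a + a r^β) = (1 + 2a) (2 + r^β)`, which expands to
`P_{a,β}(r) = 0`. The first two coordinates agree by symmetry, and the three components of `F`
sum to `1 - (x₁ + x₂ + x₃) = 0` on the simplex, so `F₃ = 0` follows as well.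
-/

noncomputable def symF (a β : ℝ) (i : Fin 3) (x₁ x₂ x₃ : ℝ) : ℝ :=
  let S := x₁ ^ β + x₂ ^ β + x₃ ^ β
  match i with
  | 0 => (x₁ ^ β + a * (x₂ ^ β + x₃ ^ β)) / ((1 + 2 * a) * S) - x₁
  | 1 => (x₂ ^ β + a * (x₁ ^ β + x₃ ^ β)) / ((1 + 2 * a) * S) - x₂
  | 2 => (x₃ ^ β + a * (x₁ ^ β + x₂ ^ β)) / ((1 + 2 * a) * S) - x₃

noncomputable def P (a β z : ℝ) : ℝ := a * z ^ (β + 1) - z ^ β + (1 + a) * z - 2 * a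

theorem sum_symF {a β : ℝ} (x₁ x₂ x₃ : ℝ)
    (hden : (1 + 2 * a) * (x₁ ^ β + x₂ ^ β + x₃ ^ β) ≠ 0) :
    ∑ i, symF a β i x₁ x₂ x₃ = 1 - (x₁ + x₂ + x₃) := by
  simp only [Fin.sum_univ_three, symF]
  rw [sub_add_sub_comm, sub_add_sub_comm, ← add_div, ← add_div,
    div_eq_one_iff_eq hden |>.mpr (by ring)]

theorem symF_one_diag_eq_symF_zero (a β x z : ℝ) : symF a β 1 x x z = symF a β 0 x x z := rfl

theorem symF_zero_diag_eq_zero_iff {a β r : ℝ} (ha : 0 < 1 + 2 * a) (hr : 0 < r) :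
    symF a β 0 (1 / (r + 2)) (1 / (r + 2)) (r * (1 / (r + 2))) = 0 ↔ P a β r = 0 := by
  set x : ℝ := 1 / (r + 2) with hx_def
  have hx : 0 < x := by positivity
  have hxβ : 0 < x ^ β := Real.rpow_pos_of_pos hx β
  have hrβ : 0 < r ^ β := Real.rpow_pos_of_pos hr β
  have hden : (1 + 2 * a) * (x ^ β + x ^ β + r ^ β * x ^ β) ≠ 0 := by positivity
  have hP : P a β r = a * (r ^ β * r) - r ^ β + (1 + a) * r - 2 * a := by
    rw [P, Real.rpow_add hr, Real.rpow_one]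
  have numerator_sub : x ^ β + a * (x ^ β + r ^ β * x ^ β)
      - x * ((1 + 2 * a) * (x ^ β + x ^ β + r ^ β * x ^ β)) = P a β r * (x ^ β * x) := by
    rw [hP, hx_def]
    field_simp
    ring
  simp only [symF, Real.mul_rpow hr.le hx.le]
  rw [sub_eq_zero, div_eq_iff hden, ← sub_eq_zero, numerator_sub, mul_eq_zero]
  simp [hxβ.ne', hx.ne']

theorem stationary_iff_root_general (a β r : ℝ) (ha : 0 < a) (hr : 0 < r) :
    (∀ i : Fin 3, symF a β i (1 / (r + 2)) (1 / (r + 2)) (r * (1 / (r + 2))) = 0) ↔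
      P a β r = 0 := by
  have ha' : 0 < 1 + 2 * a := by linarith
  refine ⟨fun h ↦ (symF_zero_diag_eq_zero_iff ha' hr).1 (h 0), fun hP ↦ ?_⟩
  have h₀ := (symF_zero_diag_eq_zero_iff ha' hr).2 hP
  have h₁ : symF a β 1 (1 / (r + 2)) (1 / (r + 2)) (r * (1 / (r + 2))) = 0 := by
    rwa [symF_one_diag_eq_symF_zero]
  have hsum := sum_symF (a := a) (β := β) (1 / (r + 2)) (1 / (r + 2)) (r * (1 / (r + 2)))
    (by positivity)
  have h_simplex : 1 / (r + 2) + 1 / (r + 2) + r * (1 / (r + 2)) = 1 := by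
    field_simp
    ring
  have h₂ : symF a β 2 (1 / (r + 2)) (1 / (r + 2)) (r * (1 / (r + 2))) = 0 := by
    rw [Fin.sum_univ_three, h₀, h₁, h_simplex] at hsum
    linarith
  intro i
  fin_cases i
  exacts [h₀, h₁, h₂]

theorem stationary_iff_root (a β r : ℝ) (ha : 0 < a) (hβ : 0 < β) (hr : 0 < r) :
    (∀ i : Fin 3, symF a β i (1 / (r + 2)) (1 / (r + 2)) (r * (1 / (r + 2))) = 0) ↔
      P a β r = 0 :=
  stationary_iff_root_general a β r ha hr
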